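/- Exponential forgetting of the filter (crude form used in the paper): let ν and ν′ be probability vectors and run the scaled forward recursion for k steps with the same row-stochastic matrices Γ^(1),…,Γ^(k) and the same diagonal weight matrices P_1,…,P_k (weights in [m,M] with m > 0), starting respectively from ν and ν′, i.e. φ_1 = νΓ^(1)P_1/(νΓ^(1)P_1 1ᵀ), φ_s = φ_{s−1}Γ^(s)P_s/(φ_{s−1}Γ^(s)P_s 1ᵀ) and analogously φ′_s from ν′. If every product of l consecutive matrices among Γ^(1),…,Γ^(k+1) has all entries ≥ ε > 0, then the resulting prediction filters p = φ_kΓ^{(k+1)} and p′ = φ′_kΓ^{(k+1)} satisfy ‖p − p′‖₁ ≤ 2·(1 − (ε·m/M)^l)^{⌊(k+1)/l⌋}, where ‖u‖₁ = Σ_i |u_i|. -/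

import Mathlib

open Finset

/-- A probability (row) vector in `ℝ^N`. -/
def IsProbVec {N : ℕ} (v : Fin N → ℝ) : Prop :=
  (∀ i, 0 ≤ v i) ∧ ∑ i, v i = 1

/-- A row-stochastic `N × N` real matrix. -/
def IsRowStochastic {N : ℕ} (A : Matrix (Fin N) (Fin N) ℝ) : Prop :=
  (∀ i j, 0 ≤ A i j) ∧ ∀ i, ∑ j, A i j = 1

/-- Normalize a vector to sum one (dividing by the sum of its entries). -/
noncomputable def probNormalize {N : ℕ} (v : Fin N → ℝ) : Fin N → ℝ :=
  fun j => v j / ∑ i, v i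

/-- The unnormalized forward update `v ↦ v Γ P` with `P = diag(w)`. -/
def fwdVec {N : ℕ} (A : Matrix (Fin N) (Fin N) ℝ) (w : Fin N → ℝ) (v : Fin N → ℝ) :
    Fin N → ℝ :=
  fun j => (∑ i, v i * A i j) * w j

/-- `fwdRun Γ w start v n` is the scaled forward variable at time `start + n`
obtained by initializing the scaled forward recursion with vector `v` at time
`start` (each step from time `τ - 1` to `τ` uses `Γ τ` and weights `w τ`). -/
noncomputable def fwdRun {N : ℕ} (Γ : ℕ → Matrix (Fin N) (Fin N) ℝ)
    (w : ℕ → Fin N → ℝ) (start : ℕ) (v : Fin N → ℝ) : ℕ → Fin N → ℝ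
  | 0 => v
  | n + 1 =>
      probNormalize
        (fwdVec (Γ (start + n + 1)) (w (start + n + 1)) (fwdRun Γ w start v n))

/-- The scaled forward variable `φ_t` (for `t = 1, …, T`):
`φ_1 = δ P_1 / (δ P_1 1ᵀ)` and `φ_t = φ_{t-1} Γ^(t) P_t / (φ_{t-1} Γ^(t) P_t 1ᵀ)`. -/
noncomputable def phi {N : ℕ} (δ : Fin N → ℝ) (Γ : ℕ → Matrix (Fin N) (Fin N) ℝ)
    (w : ℕ → Fin N → ℝ) (t : ℕ) : Fin N → ℝ :=
  fwdRun Γ w 1 (probNormalize (fun j => δ j * w 1 j)) (t - 1)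

/-- The normalizing constant `v Γ^(t) P_t 1ᵀ`. -/
def contrib {N : ℕ} (Γ : ℕ → Matrix (Fin N) (Fin N) ℝ) (w : ℕ → Fin N → ℝ)
    (v : Fin N → ℝ) (t : ℕ) : ℝ :=
  ∑ j, (∑ i, v i * Γ t i j) * w t j

/-- The exact HMM log-likelihood
`ℓ_T = log (δ P_1 1ᵀ) + ∑_{t=2}^T log (φ_{t-1} Γ^(t) P_t 1ᵀ)`. -/
noncomputable def loglik {N : ℕ} (δ : Fin N → ℝ) (Γ : ℕ → Matrix (Fin N) (Fin N) ℝ)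
    (w : ℕ → Fin N → ℝ) (T : ℕ) : ℝ :=
  Real.log (∑ j, δ j * w 1 j)
    + ∑ t ∈ Finset.Icc 2 T, Real.log (contrib Γ w (phi δ Γ w (t - 1)) t)

/-- The banded (bandwidth-`k`) HMM log-likelihood: the first two blocks are exact,
and for blocks `b ≥ 3` the forward recursion is re-initialized with the fixed
probability vector `ρ` at time `t_{b-1} = (b-2)k`. -/
noncomputable def bandedLoglik {N : ℕ} (δ ρ : Fin N → ℝ)
    (Γ : ℕ → Matrix (Fin N) (Fin N) ℝ) (w : ℕ → Fin N → ℝ) (k B : ℕ) : ℝ :=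
  Real.log (∑ j, δ j * w 1 j)
    + ∑ t ∈ Finset.Icc 2 (2 * k), Real.log (contrib Γ w (phi δ Γ w (t - 1)) t)
    + ∑ b ∈ Finset.Icc 3 B, ∑ t ∈ Finset.Icc ((b - 1) * k + 1) (b * k),
        Real.log (contrib Γ w (fwdRun Γ w ((b - 2) * k) ρ (t - 1 - (b - 2) * k)) t)

/-- The product `Γ^(t) Γ^(t+1) ⋯ Γ^(t+l-1)` of `l` consecutive transition matrices. -/
noncomputable def matProd {N : ℕ} (Γ : ℕ → Matrix (Fin N) (Fin N) ℝ) (t l : ℕ) :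
    Matrix (Fin N) (Fin N) ℝ :=
  ((List.range l).map fun s => Γ (t + s)).prod

/-!
Write the filter after `n` steps as `probNormalize (ν B)` with `B = Γ⁽¹⁾P₁ ⋯ Γ⁽ⁿ⁾Pₙ`. Splitting off
the row sums of `B`, this is `π K`, where `K` is `B` with normalized rows and `π` is a
probability vector depending on `ν`; hence `‖p - p'‖₁ ≤ 2 δ(K)` with `δ` Dobrushin's
ergodicity coefficient. Cutting `B` into `⌊n/l⌋` blocks of length `l` followed by a remainder,
`K` factors as the product of the normalized kernels `A diag(β)` of the blocks (`β` the row sums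
of the rest) and the normalized remainder. Each block kernel dominates `ε (m/M)^l` times a
probability vector (Doeblin's condition), so its `δ` is at most `1 - (ε m / M)^l`, and `δ` is
submultiplicative.
-/

open Matrix

section MatProd

variable {N : ℕ} {X : ℕ → Matrix (Fin N) (Fin N) ℝ}

lemma matProd_add (t a b : ℕ) :
    matProd X t (a + b) = matProd X t a * matProd X (t + a) b := by
  simp only [matProd, List.range_add, List.map_append, List.prod_append, List.map_map]
  congr 3
  ext s : 1
  simp [Function.comp, add_assoc]

lemma matProd_zero (t : ℕ) : matProd X t 0 = 1 := rfl

lemma matProd_one (t : ℕ) : matProd X t 1 = X t := by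
  simp [matProd]

lemma matProd_mem_rowStochastic {t n : ℕ}
    (hX : ∀ s, t ≤ s → s < t + n → X s ∈ rowStochastic ℝ (Fin N)) :
    matProd X t n ∈ rowStochastic ℝ (Fin N) :=
  Submonoid.list_prod_mem _ fun A hA => by
    obtain ⟨s, hs, rfl⟩ := List.mem_map.1 hA
    exact hX _ (by omega) (by simpa using List.mem_range.1 hs)

end MatProd

section Kernel

variable {ι κ : Type*} [Fintype κ]

noncomputable def rowNormalize (B : Matrix ι κ ℝ) : Matrix ι κ ℝ :=
  Matrix.of fun i j => B i j / ∑ j', B i j'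

lemma sum_rowNormalize {B : Matrix ι κ ℝ} {i : ι} (hB : ∑ j, B i j ≠ 0) :
    ∑ j, rowNormalize B i j = 1 := by
  simp [rowNormalize, ← Finset.sum_div, hB]

lemma rowNormalize_mul {ρ : Type*} [Fintype ρ] (A : Matrix ι κ ℝ) {K : Matrix κ ρ ℝ}
    (hK : ∀ q, ∑ j, K q j = 1) :
    rowNormalize (A * K) = rowNormalize A * K := by
  have hrow : ∀ i, ∑ j, (A * K) i j = ∑ q, A i q := fun i => by
    simp only [mul_apply]
    rw [Finset.sum_comm]
    simp [← Finset.mul_sum, hK]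
  ext i j
  rw [rowNormalize, of_apply, hrow, mul_apply, mul_apply, Finset.sum_div]
  simp [rowNormalize, div_mul_eq_mul_div]

lemma diagonal_mul_rowNormalize [Fintype ι] [DecidableEq ι] {B : Matrix ι κ ℝ}
    (hB : ∀ i, ∑ j, B i j ≠ 0) :
    diagonal (fun i => ∑ j, B i j) * rowNormalize B = B := by
  ext i j
  simp [rowNormalize, diagonal_mul, mul_div_cancel₀ _ (hB i)]

lemma rowNormalize_mul_eq {ρ : Type*} [Fintype ρ] [DecidableEq κ] (A : Matrix ι κ ℝ)
    {C : Matrix κ ρ ℝ} (hC : ∀ q, ∑ j, C q j ≠ 0) :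
    rowNormalize (A * C) =
      rowNormalize (A * diagonal (fun q => ∑ j, C q j)) * rowNormalize C := by
  conv_lhs => rw [← diagonal_mul_rowNormalize hC, ← Matrix.mul_assoc]
  exact rowNormalize_mul _ fun q => sum_rowNormalize (hC q)

lemma sum_mul_diagonal_sum_row {ρ : Type*} [Fintype ρ] [DecidableEq κ] (A : Matrix ι κ ℝ)
    (C : Matrix κ ρ ℝ) (i : ι) :
    ∑ q, (A * diagonal (fun q => ∑ j, C q j)) i q = ∑ j, (A * C) i j := by
  simp only [mul_diagonal, Finset.mul_sum]
  simp only [mul_apply]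
  exact Finset.sum_comm

end Kernel

section Dobrushin

variable {ι κ : Type*} [Fintype ι] [Fintype κ]

/-- Dobrushin's ergodicity coefficient of `K` is at most `c`. -/
def HasDobrushinBound (K : Matrix ι κ ℝ) (c : ℝ) : Prop :=
  ∀ d : ι → ℝ, ∑ i, d i = 0 → ∑ j, |(d ᵥ* K) j| ≤ c * ∑ i, |d i|

lemma sum_vecMul_of_sum_row_eq_one {K : Matrix ι κ ℝ} (hK : ∀ i, ∑ j, K i j = 1)
    (d : ι → ℝ) : ∑ j, (d ᵥ* K) j = ∑ i, d i := by
  simp only [vecMul, dotProduct]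
  rw [Finset.sum_comm]
  simp [← Finset.mul_sum, hK]

/-- Doeblin's condition. Since `d` has zero sum, `lam` can be subtracted from every row of `K`
for free. -/
lemma hasDobrushinBound_of_le {K : Matrix ι κ ℝ} {lam : κ → ℝ}
    (hK : ∀ i, ∑ j, K i j = 1) (hlam : ∀ i j, lam j ≤ K i j) :
    HasDobrushinBound K (1 - ∑ j, lam j) := by
  intro d hd
  calc ∑ j, |(d ᵥ* K) j| = ∑ j, |∑ i, d i * (K i j - lam j)| := by
        refine Finset.sum_congr rfl fun j _ => ?_
        simp [vecMul, dotProduct, mul_sub, Finset.sum_sub_distrib, ← Finset.sum_mul, hd]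
    _ ≤ ∑ j, ∑ i, |d i| * (K i j - lam j) := by
        refine Finset.sum_le_sum fun j _ => (Finset.abs_sum_le_sum_abs _ _).trans_eq ?_
        simp [abs_mul, abs_of_nonneg (sub_nonneg.2 (hlam _ j))]
    _ = (1 - ∑ j, lam j) * ∑ i, |d i| := by
        rw [Finset.sum_comm, Finset.mul_sum]
        simp [← Finset.mul_sum, Finset.sum_sub_distrib, hK, mul_comm]

lemma HasDobrushinBound.mono {K : Matrix ι κ ℝ} {c c' : ℝ} (h : HasDobrushinBound K c)
    (hcc' : c ≤ c') : HasDobrushinBound K c' := fun d hd =>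
  (h d hd).trans (mul_le_mul_of_nonneg_right hcc' (Finset.sum_nonneg fun _ _ => abs_nonneg _))

lemma HasDobrushinBound.mul {ρ : Type*} [Fintype ρ] {K : Matrix ι κ ℝ} {L : Matrix κ ρ ℝ}
    {c c' : ℝ} (hK1 : ∀ i, ∑ j, K i j = 1) (hK : HasDobrushinBound K c)
    (hL : HasDobrushinBound L c') (hc' : 0 ≤ c') : HasDobrushinBound (K * L) (c' * c) := by
  intro d hd
  rw [← vecMul_vecMul, mul_assoc]
  refine (hL _ ((sum_vecMul_of_sum_row_eq_one hK1 d).trans hd)).trans ?_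
  exact mul_le_mul_of_nonneg_left (hK d hd) hc'

lemma hasDobrushinBound_rowNormalize_of_nonneg {B : Matrix ι κ ℝ} (hB : ∀ i j, 0 ≤ B i j)
    (hB' : ∀ i, 0 < ∑ j, B i j) : HasDobrushinBound (rowNormalize B) 1 := by
  simpa using hasDobrushinBound_of_le (lam := 0) (fun i => sum_rowNormalize (hB' i).ne')
    fun i j => div_nonneg (hB i j) (hB' i).le

lemma hasDobrushinBound_rowNormalize_mul_diagonal [Nonempty κ] [DecidableEq κ]
    {A : Matrix ι κ ℝ} {β : κ → ℝ} {a b : ℝ} (ha : 0 < a)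
    (hA : ∀ i q, a ≤ A i q ∧ A i q ≤ b) (hβ : ∀ q, 0 < β q) :
    HasDobrushinBound (rowNormalize (A * diagonal β)) (1 - a / b) := by
  set Z := ∑ q, β q
  have hZ : 0 < Z := Finset.sum_pos (fun q _ => hβ q) Finset.univ_nonempty
  have hrow : ∀ i, 0 < ∑ q, (A * diagonal β) i q ∧ ∑ q, (A * diagonal β) i q ≤ b * Z := by
    intro i
    simp only [mul_diagonal]
    refine ⟨Finset.sum_pos (fun q _ => mul_pos (ha.trans_le (hA i q).1) (hβ q))
      Finset.univ_nonempty, ?_⟩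
    rw [Finset.mul_sum]
    exact Finset.sum_le_sum fun q _ => mul_le_mul_of_nonneg_right (hA i q).2 (hβ q).le
  have hlam : ∀ i q, a * β q / (b * Z) ≤ rowNormalize (A * diagonal β) i q := by
    intro i q
    rw [rowNormalize, of_apply, mul_diagonal]
    exact div_le_div₀ (mul_nonneg (ha.le.trans (hA i q).1) (hβ q).le)
      (mul_le_mul_of_nonneg_right (hA i q).1 (hβ q).le) (hrow i).1 (hrow i).2
  convert hasDobrushinBound_of_le (fun i => sum_rowNormalize (hrow i).1.ne') hlam using 2
  rw [← Finset.sum_div, ← Finset.mul_sum, mul_div_mul_right _ _ hZ.ne']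

end Dobrushin

section Weighted

variable {N : ℕ} {Γ : ℕ → Matrix (Fin N) (Fin N) ℝ} {w : ℕ → Fin N → ℝ} {m M : ℝ}

lemma matProd_mul_diagonal_bounds (hm : 0 ≤ m) {t : ℕ} :
    ∀ {n : ℕ}, (∀ s, t ≤ s → s < t + n → Γ s ∈ rowStochastic ℝ (Fin N)) →
      (∀ s, t ≤ s → s < t + n → ∀ j, m ≤ w s j ∧ w s j ≤ M) → ∀ i j,
      m ^ n * matProd Γ t n i j ≤ matProd (fun s => Γ s * diagonal (w s)) t n i j ∧
        matProd (fun s => Γ s * diagonal (w s)) t n i j ≤ M ^ n * matProd Γ t n i j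
  | 0, _, _, i, j => by simp [matProd_zero]
  | n + 1, hΓ, hw, i, j => by
    have ih := matProd_mul_diagonal_bounds hm (n := n) (fun s h₁ h₂ => hΓ s h₁ (by omega))
      (fun s h₁ h₂ => hw s h₁ (by omega)) i
    have hP : ∀ q, 0 ≤ matProd Γ t n i q := fun q =>
      (matProd_mem_rowStochastic fun s h₁ h₂ => hΓ s h₁ (by omega)).1 i q
    have hS : ∀ q, 0 ≤ matProd (fun s => Γ s * diagonal (w s)) t n i q := fun q =>
      (mul_nonneg (pow_nonneg hm n) (hP q)).trans (ih q).1
    have hG := (hΓ (t + n) (by omega) (by omega)).1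
    have hwt := hw (t + n) (by omega) (by omega) j
    rw [matProd_add, matProd_one, matProd_add, matProd_one, ← Matrix.mul_assoc, mul_diagonal,
      mul_apply, mul_apply]
    constructor
    · calc m ^ (n + 1) * ∑ q, matProd Γ t n i q * Γ (t + n) q j
          = (∑ q, m ^ n * matProd Γ t n i q * Γ (t + n) q j) * m := by
            rw [Finset.mul_sum, Finset.sum_mul]; exact Finset.sum_congr rfl fun q _ => by ring
        _ ≤ _ := by
          gcongr with q _
          exacts [Finset.sum_nonneg fun q _ => mul_nonneg (hS q) (hG q j), hG q j, (ih q).1, hwt.1]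
    · calc (∑ q, matProd (fun s => Γ s * diagonal (w s)) t n i q * Γ (t + n) q j) * w (t + n) j
          ≤ (∑ q, M ^ n * matProd Γ t n i q * Γ (t + n) q j) * M := by
            have hM : 0 ≤ M := hm.trans (hwt.1.trans hwt.2)
            gcongr with q _
            exacts [hm.trans hwt.1, Finset.sum_nonneg fun q _ =>
              mul_nonneg (mul_nonneg (pow_nonneg hM n) (hP q)) (hG q j), hG q j, (ih q).2, hwt.2]
        _ = M ^ (n + 1) * ∑ q, matProd Γ t n i q * Γ (t + n) q j := by
            rw [Finset.mul_sum, Finset.sum_mul]; exact Finset.sum_congr rfl fun q _ => by ring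

lemma sum_matProd_mul_diagonal_pos (hm : 0 < m) {t n : ℕ}
    (hΓ : ∀ s, t ≤ s → s < t + n → Γ s ∈ rowStochastic ℝ (Fin N))
    (hw : ∀ s, t ≤ s → s < t + n → ∀ j, m ≤ w s j ∧ w s j ≤ M) (i : Fin N) :
    0 < ∑ j, matProd (fun s => Γ s * diagonal (w s)) t n i j :=
  calc 0 < m ^ n * ∑ j, matProd Γ t n i j := by
        rw [sum_row_of_mem_rowStochastic (matProd_mem_rowStochastic hΓ), mul_one]
        positivity
    _ ≤ _ := by
        rw [Finset.mul_sum]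
        exact Finset.sum_le_sum fun j _ => (matProd_mul_diagonal_bounds hm.le hΓ hw i j).1

variable [NeZero N] {l : ℕ} {ε : ℝ}

lemma le_one_of_le_matProd {t : ℕ} (hΓ : ∀ s, t ≤ s → s < t + l → Γ s ∈ rowStochastic ℝ (Fin N))
    (hprim : ∀ i j, ε ≤ matProd Γ t l i j) : ε ≤ 1 :=
  (hprim 0 0).trans (le_one_of_mem_rowStochastic (matProd_mem_rowStochastic hΓ))

lemma hasDobrushinBound_rowNormalize_block (hl : l ≠ 0) (hε : 0 < ε) (hm : 0 < m) {t : ℕ}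
    (hΓ : ∀ s, t ≤ s → s < t + l → Γ s ∈ rowStochastic ℝ (Fin N))
    (hw : ∀ s, t ≤ s → s < t + l → ∀ j, m ≤ w s j ∧ w s j ≤ M)
    (hprim : ∀ i j, ε ≤ matProd Γ t l i j) {β : Fin N → ℝ} (hβ : ∀ q, 0 < β q) :
    HasDobrushinBound (rowNormalize (matProd (fun s => Γ s * diagonal (w s)) t l * diagonal β))
      (1 - (ε * m / M) ^ l) := by
  have hP := matProd_mem_rowStochastic hΓ
  have hε1 := le_one_of_le_matProd hΓ hprim
  have hM : 0 ≤ M := hm.le.trans ((hw t le_rfl (by omega) 0).1.trans (hw t le_rfl (by omega) 0).2)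
  have hA : ∀ i j, m ^ l * ε ≤ matProd (fun s => Γ s * diagonal (w s)) t l i j ∧
      matProd (fun s => Γ s * diagonal (w s)) t l i j ≤ M ^ l := fun i j => by
    obtain ⟨hlo, hhi⟩ := matProd_mul_diagonal_bounds hm.le hΓ hw i j
    exact ⟨(mul_le_mul_of_nonneg_left (hprim i j) (by positivity)).trans hlo,
      hhi.trans (mul_le_of_le_one_right (by positivity) (le_one_of_mem_rowStochastic hP))⟩
  refine (hasDobrushinBound_rowNormalize_mul_diagonal (by positivity) hA hβ).mono ?_
  have : ε ^ l ≤ ε := pow_le_of_le_one hε.le hε1 hl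
  rw [div_pow, mul_pow, mul_comm (m ^ l)]
  gcongr

lemma mul_div_pow_le_one (hε0 : 0 ≤ ε) (hε1 : ε ≤ 1) (hm : 0 < m) (hmM : m ≤ M) :
    (ε * m / M) ^ l ≤ 1 :=
  have hM := hm.trans_le hmM
  pow_le_one₀ (by positivity) <| (div_le_one hM).2 (by nlinarith)

lemma hasDobrushinBound_rowNormalize_matProd (hl : l ≠ 0) (hε : 0 < ε) (hm : 0 < m)
    (hmM : m ≤ M) (r : ℕ) : ∀ (j t : ℕ),
    (∀ s, t ≤ s → s < t + (j * l + r) → Γ s ∈ rowStochastic ℝ (Fin N)) →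
    (∀ s, t ≤ s → s < t + (j * l + r) → ∀ q, m ≤ w s q ∧ w s q ≤ M) →
    (∀ s, t ≤ s → s + l ≤ t + (j * l + r) → ∀ i q, ε ≤ matProd Γ s l i q) →
    HasDobrushinBound (rowNormalize (matProd (fun s => Γ s * diagonal (w s)) t (j * l + r)))
      ((1 - (ε * m / M) ^ l) ^ j)
  | 0, t, hΓ, hw, _ => by
    rw [zero_mul, zero_add, pow_zero] at *
    exact hasDobrushinBound_rowNormalize_of_nonneg
      (fun i q => (mul_nonneg (pow_nonneg hm.le r) ((matProd_mem_rowStochastic hΓ).1 i q)).trans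
        (matProd_mul_diagonal_bounds hm.le hΓ hw i q).1)
      (sum_matProd_mul_diagonal_pos hm hΓ hw)
  | j + 1, t, hΓ, hw, hprim => by
    have hlen : (j + 1) * l + r = l + (j * l + r) := by ring
    rw [hlen] at hΓ hw hprim ⊢
    have hblock := hprim t le_rfl (by omega)
    have hε1 := le_one_of_le_matProd (fun s h₁ h₂ => hΓ s h₁ (by omega)) hblock
    have hδ := sub_nonneg.2 (mul_div_pow_le_one (l := l) hε.le hε1 hm hmM)
    have hC := sum_matProd_mul_diagonal_pos (t := t + l) (n := j * l + r) hm
      (fun s h₁ h₂ => hΓ s (by omega) (by omega)) (fun s h₁ h₂ => hw s (by omega) (by omega))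
    rw [matProd_add, rowNormalize_mul_eq _ fun q => (hC q).ne', pow_succ]
    refine HasDobrushinBound.mul (fun i => sum_rowNormalize ?_)
      (hasDobrushinBound_rowNormalize_block hl hε hm (fun s h₁ h₂ => hΓ s h₁ (by omega))
        (fun s h₁ h₂ => hw s h₁ (by omega)) hblock hC)
      (hasDobrushinBound_rowNormalize_matProd hl hε hm hmM r j (t + l)
        (fun s h₁ h₂ => hΓ s (by omega) (by omega)) (fun s h₁ h₂ => hw s (by omega) (by omega))
        (fun s h₁ h₂ => hprim s (by omega) (by omega))) (pow_nonneg hδ j)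
    rw [sum_mul_diagonal_sum_row, ← matProd_add]
    exact (sum_matProd_mul_diagonal_pos hm hΓ hw i).ne'

end Weighted

section Filter

variable {N : ℕ}

lemma isProbVec_probNormalize {v : Fin N → ℝ} (hv : ∀ i, 0 ≤ v i) (hsum : 0 < ∑ i, v i) :
    IsProbVec (probNormalize v) :=
  ⟨fun i => div_nonneg (hv i) hsum.le, by simp [probNormalize, ← Finset.sum_div, hsum.ne']⟩

lemma IsProbVec.probNormalize_eq {v : Fin N → ℝ} (hv : IsProbVec v) : probNormalize v = v := by
  ext j
  simp [probNormalize, hv.2]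

lemma IsProbVec.sum_mul_pos {ν g : Fin N → ℝ} (hν : IsProbVec ν) (hg : ∀ i, 0 < g i) :
    0 < ∑ i, ν i * g i := by
  obtain ⟨i, -, hi⟩ := Finset.exists_lt_of_sum_lt (s := Finset.univ) (f := 0) (g := ν)
    (by simp [hν.2])
  exact Finset.sum_pos' (fun i _ => mul_nonneg (hν.1 i) (hg i).le)
    ⟨i, Finset.mem_univ i, mul_pos hi (hg i)⟩

lemma IsProbVec.vecMul {ν : Fin N → ℝ} {A : Matrix (Fin N) (Fin N) ℝ} (hν : IsProbVec ν)
    (hA : A ∈ rowStochastic ℝ (Fin N)) : IsProbVec (ν ᵥ* A) :=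
  ⟨nonneg_vecMul_of_mem_rowStochastic hA hν.1, by
    rw [sum_vecMul_of_sum_row_eq_one (sum_row_of_mem_rowStochastic hA), hν.2]⟩

lemma probNormalize_eq_inv_smul (v : Fin N → ℝ) : probNormalize v = (∑ i, v i)⁻¹ • v := by
  ext j
  simp [probNormalize, div_eq_inv_mul]

lemma probNormalize_smul {c : ℝ} (hc : c ≠ 0) (v : Fin N → ℝ) :
    probNormalize (c • v) = probNormalize v := by
  ext j
  simp [probNormalize, ← Finset.mul_sum, mul_div_mul_left _ _ hc]

lemma probNormalize_vecMul {K : Matrix (Fin N) (Fin N) ℝ} (hK : ∀ i, ∑ j, K i j = 1)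
    (u : Fin N → ℝ) : probNormalize (u ᵥ* K) = probNormalize u ᵥ* K := by
  ext j
  rw [probNormalize, sum_vecMul_of_sum_row_eq_one hK]
  simp only [probNormalize, vecMul, dotProduct, Finset.sum_div, div_mul_eq_mul_div]

lemma probNormalize_vecMul_eq {B : Matrix (Fin N) (Fin N) ℝ} (hB : ∀ i, ∑ j, B i j ≠ 0)
    (v : Fin N → ℝ) :
    probNormalize (v ᵥ* B) =
      probNormalize (fun i => v i * ∑ j, B i j) ᵥ* rowNormalize B := by
  conv_lhs => rw [← diagonal_mul_rowNormalize hB]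
  rw [← vecMul_vecMul, probNormalize_vecMul fun i => sum_rowNormalize (hB i)]
  congr 2
  ext i
  exact vecMul_diagonal _ _ i

lemma HasDobrushinBound.sum_abs_vecMul_sub_le {K : Matrix (Fin N) (Fin N) ℝ} {c : ℝ}
    (hK : HasDobrushinBound K c) (hc : 0 ≤ c) {π π' : Fin N → ℝ} (hπ : IsProbVec π)
    (hπ' : IsProbVec π') : ∑ j, |(π ᵥ* K) j - (π' ᵥ* K) j| ≤ 2 * c := by
  have hd := hK (π - π') (by simp [Finset.sum_sub_distrib, hπ.2, hπ'.2])
  have hd1 : ∑ i, |π i - π' i| ≤ 2 :=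
    calc ∑ i, |π i - π' i| ≤ ∑ i, (π i + π' i) := Finset.sum_le_sum fun i _ => by
          simpa [abs_of_nonneg (hπ.1 i), abs_of_nonneg (hπ'.1 i)] using abs_sub (π i) (π' i)
      _ = 2 := by rw [Finset.sum_add_distrib, hπ.2, hπ'.2]; norm_num
  simp only [sub_vecMul, Pi.sub_apply] at hd
  linarith [mul_le_mul_of_nonneg_left hd1 hc]

lemma fwdVec_eq_vecMul (A : Matrix (Fin N) (Fin N) ℝ) (w v : Fin N → ℝ) :
    fwdVec A w v = v ᵥ* (A * diagonal w) := by
  ext j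
  simp [fwdVec, vecMul, dotProduct, Finset.sum_mul, mul_assoc]

end Filter

section ForwardRecursion

variable {N : ℕ} {Γ : ℕ → Matrix (Fin N) (Fin N) ℝ} {w : ℕ → Fin N → ℝ} {start : ℕ}

lemma fwdRun_succ (v : Fin N → ℝ) (n : ℕ) :
    fwdRun Γ w start v (n + 1) = probNormalize
      (fwdRun Γ w start v n ᵥ* (Γ (start + n + 1) * diagonal (w (start + n + 1)))) := by
  rw [fwdRun, fwdVec_eq_vecMul]

lemma fwdRun_congr {w' : ℕ → Fin N → ℝ} (v : Fin N → ℝ) :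
    ∀ {n : ℕ}, (∀ s, start < s → s ≤ start + n → w' s = w s) →
      fwdRun Γ w' start v n = fwdRun Γ w start v n
  | 0, _ => rfl
  | n + 1, h => by
    rw [fwdRun_succ, fwdRun_succ, fwdRun_congr v fun s h₁ h₂ => h s h₁ (by omega),
      h _ (by omega) (by omega)]

lemma isProbVec_fwdRun {v : Fin N → ℝ} (hv : IsProbVec v) :
    ∀ {n : ℕ}, (∀ s, start < s → s ≤ start + n → Γ s ∈ rowStochastic ℝ (Fin N)) →
      (∀ s j, start < s → s ≤ start + n → 0 < w s j) → IsProbVec (fwdRun Γ w start v n)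
  | 0, _, _ => hv
  | n + 1, hΓ, hw => by
    have hφ := (isProbVec_fwdRun hv (n := n) (fun s h₁ h₂ => hΓ s h₁ (by omega))
      (fun s j h₁ h₂ => hw s j h₁ (by omega))).vecMul (hΓ (start + n + 1) (by omega) (by omega))
    have hw' := fun j => hw (start + n + 1) j (by omega) (by omega)
    rw [fwdRun_succ]
    refine isProbVec_probNormalize (fun j => ?_) ?_ <;> rw [← fwdVec_eq_vecMul]
    · exact mul_nonneg (hφ.1 j) (hw' j).le
    · exact hφ.sum_mul_pos hw'

lemma fwdRun_eq_probNormalize_vecMul {v : Fin N → ℝ} (hv : IsProbVec v) :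
    ∀ {n : ℕ}, (∀ s, start < s → s ≤ start + n → Γ s ∈ rowStochastic ℝ (Fin N)) →
      (∀ s j, start < s → s ≤ start + n → 0 < w s j) →
      fwdRun Γ w start v n =
        probNormalize (v ᵥ* matProd (fun s => Γ s * diagonal (w s)) (start + 1) n)
  | 0, _, _ => by rw [matProd_zero, vecMul_one, hv.probNormalize_eq]; rfl
  | n + 1, hΓ, hw => by
    have ih := fwdRun_eq_probNormalize_vecMul hv (n := n) (fun s h₁ h₂ => hΓ s h₁ (by omega))
      (fun s j h₁ h₂ => hw s j h₁ (by omega))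
    have hsum : ∑ j, (v ᵥ* matProd (fun s => Γ s * diagonal (w s)) (start + 1) n) j ≠ 0 := by
      intro h0
      have := (isProbVec_fwdRun hv (n := n) (fun s h₁ h₂ => hΓ s h₁ (by omega))
        (fun s j h₁ h₂ => hw s j h₁ (by omega))).2
      simp [ih, probNormalize, h0] at this
    rw [fwdRun_succ, ih, probNormalize_eq_inv_smul (v ᵥ* _), smul_vecMul,
      probNormalize_smul (inv_ne_zero hsum), matProd_add, matProd_one, vecMul_vecMul,
      show start + 1 + n = start + n + 1 by omega]

lemma probNormalize_fwdVec_const {A : Matrix (Fin N) (Fin N) ℝ} {c : ℝ} {v : Fin N → ℝ}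
    (hv : IsProbVec v) (hA : A ∈ rowStochastic ℝ (Fin N)) (hc : c ≠ 0) :
    probNormalize (fwdVec A (fun _ => c) v) = v ᵥ* A := by
  have : fwdVec A (fun _ => c) v = c • (v ᵥ* A) := by
    ext j
    simp [fwdVec, vecMul, dotProduct, mul_comm]
  rw [this, probNormalize_smul hc, (hv.vecMul hA).probNormalize_eq]

theorem sum_abs_fwdRun_sub_le [NeZero N] {l n : ℕ} {ε m M : ℝ} (hl : l ≠ 0) (hε : 0 < ε)
    (hm : 0 < m) (hmM : m ≤ M) {ν ν' : Fin N → ℝ} (hν : IsProbVec ν) (hν' : IsProbVec ν')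
    (hΓ : ∀ s, start < s → s ≤ start + n → Γ s ∈ rowStochastic ℝ (Fin N))
    (hw : ∀ s j, start < s → s ≤ start + n → m ≤ w s j ∧ w s j ≤ M)
    (hprim : ∀ t, start < t → t + l ≤ start + n + 1 → ∀ i j, ε ≤ matProd Γ t l i j) :
    ∑ j, |fwdRun Γ w start ν n j - fwdRun Γ w start ν' n j| ≤
      2 * (1 - (ε * m / M) ^ l) ^ (n / l) := by
  set P := matProd (fun s => Γ s * diagonal (w s)) (start + 1) n
  have hΓ' : ∀ s, start + 1 ≤ s → s < start + 1 + n → Γ s ∈ rowStochastic ℝ (Fin N) :=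
    fun s h₁ h₂ => hΓ s (by omega) (by omega)
  have hw' : ∀ s, start + 1 ≤ s → s < start + 1 + n → ∀ j, m ≤ w s j ∧ w s j ≤ M :=
    fun s h₁ h₂ j => hw s j (by omega) (by omega)
  have hβ : ∀ i, 0 < ∑ j, P i j := sum_matProd_mul_diagonal_pos hm hΓ' hw'
  have hK : HasDobrushinBound (rowNormalize P) ((1 - (ε * m / M) ^ l) ^ (n / l)) := by
    have h := hasDobrushinBound_rowNormalize_matProd (Γ := Γ) (w := w) hl hε hm hmM (n % l)
      (n / l) (start + 1)
    rw [Nat.div_add_mod'] at h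
    exact h hΓ' hw' fun t h₁ h₂ => hprim t (by omega) (by omega)
  have hc : 0 ≤ (1 - (ε * m / M) ^ l) ^ (n / l) := by
    rcases Nat.eq_zero_or_pos (n / l) with h | h
    · rw [h, pow_zero]
      exact zero_le_one
    · have hln := (Nat.div_pos_iff.1 h).2
      have hε1 := le_one_of_le_matProd (t := start + 1) (fun s h₁ h₂ => hΓ s (by omega) (by omega))
        (hprim (start + 1) (by omega) (by omega))
      exact pow_nonneg (sub_nonneg.2 (mul_div_pow_le_one hε.le hε1 hm hmM)) _
  have hrep : ∀ μ, IsProbVec μ →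
      fwdRun Γ w start μ n = probNormalize (fun i => μ i * ∑ j, P i j) ᵥ* rowNormalize P :=
    fun μ hμ => by
      rw [fwdRun_eq_probNormalize_vecMul hμ hΓ fun s j h₁ h₂ => hm.trans_le (hw s j h₁ h₂).1,
        probNormalize_vecMul_eq fun i => (hβ i).ne']
  rw [hrep ν hν, hrep ν' hν']
  exact hK.sum_abs_vecMul_sub_le hc
    (isProbVec_probNormalize (fun i => mul_nonneg (hν.1 i) (hβ i).le) (hν.sum_mul_pos hβ))
    (isProbVec_probNormalize (fun i => mul_nonneg (hν'.1 i) (hβ i).le) (hν'.sum_mul_pos hβ))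

end ForwardRecursion

theorem prediction_filter_exponential_forgetting_general
    (N l k : ℕ) (hN : 1 ≤ N) (hl : 1 ≤ l)
    (ε m M : ℝ) (hε : 0 < ε) (hm : 0 < m) (hmM : m ≤ M)
    (ν ν' : Fin N → ℝ) (hν : IsProbVec ν) (hν' : IsProbVec ν')
    (Γ : ℕ → Matrix (Fin N) (Fin N) ℝ)
    (hΓ : ∀ t, 1 ≤ t → t ≤ k + 1 → IsRowStochastic (Γ t))
    (w : ℕ → Fin N → ℝ)
    (hw : ∀ s j, 1 ≤ s → s ≤ k → m ≤ w s j ∧ w s j ≤ M)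
    (hprim : ∀ t, 1 ≤ t → t + l - 1 ≤ k + 1 → ∀ i j, ε ≤ matProd Γ t l i j) :
    ∑ j, |(∑ i, fwdRun Γ w 0 ν k i * Γ (k + 1) i j)
          - ∑ i, fwdRun Γ w 0 ν' k i * Γ (k + 1) i j| ≤
      2 * (1 - (ε * m / M) ^ l) ^ ((k + 1) / l) := by
  have : NeZero N := ⟨by omega⟩
  have hΓ' : ∀ t, 0 < t → t ≤ k + 1 → Γ t ∈ rowStochastic ℝ (Fin N) :=
    fun t h₁ h₂ => mem_rowStochastic_iff_sum.2 (hΓ t h₁ h₂)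
  -- The last step uses the constant weight `M`, which the normalization removes again.
  set w' := Function.update w (k + 1) fun _ => M
  have hw' : ∀ s j, 0 < s → s ≤ k + 1 → m ≤ w' s j ∧ w' s j ≤ M := by
    intro s j h₁ h₂
    rcases (show s ≤ k ∨ s = k + 1 by omega) with h | rfl
    · simpa [w', Function.update_of_ne (show s ≠ k + 1 by omega)] using hw s j h₁ h
    · simp [w', hmM]
  have hpred : ∀ μ, IsProbVec μ →
      fwdRun Γ w' 0 μ (k + 1) = fun j => ∑ i, fwdRun Γ w 0 μ k i * Γ (k + 1) i j := by
    intro μ hμ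
    have hagree : fwdRun Γ w' 0 μ k = fwdRun Γ w 0 μ k :=
      fwdRun_congr μ fun s _ h => Function.update_of_ne (by omega) _ _
    rw [fwdRun, zero_add, show w' (k + 1) = fun _ => M from Function.update_self _ _ _, hagree,
      probNormalize_fwdVec_const (isProbVec_fwdRun hμ (fun s h₁ h₂ => hΓ' s h₁ (by omega))
        fun s j h₁ h₂ => hm.trans_le (hw s j h₁ (by omega)).1) (hΓ' _ (by omega) le_rfl)
        (hm.trans_le hmM).ne']
    rfl
  have h := sum_abs_fwdRun_sub_le (start := 0) (n := k + 1) (by omega) hε hm hmM hν hν'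
    (fun s h₁ h₂ => hΓ' s h₁ (by omega)) (fun s j h₁ h₂ => hw' s j h₁ (by omega))
    fun t h₁ h₂ => hprim t h₁ (by omega)
  simpa only [hpred ν hν, hpred ν' hν'] using h

/-- Exponential forgetting of the filter (crude form): running the
scaled forward recursion for `k` steps with the same transition matrices
`Γ^(1), …, Γ^(k)` and the same weights (in `[m, M]`, `m > 0`) from two different
probability vectors `ν`, `ν′`, if every product of `l` consecutive matrices among
`Γ^(1), …, Γ^(k+1)` has all entries `≥ ε > 0`, then the resulting prediction filters
`p = φ_k Γ^(k+1)` and `p′ = φ′_k Γ^(k+1)` satisfy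
`‖p − p′‖₁ ≤ 2 (1 − (ε m / M)^l)^⌊(k+1)/l⌋`. -/
theorem prediction_filter_exponential_forgetting
    (N l k : ℕ) (hN : 1 ≤ N) (hl : 1 ≤ l) (hk : 1 ≤ k)
    (ε m M : ℝ) (hε : 0 < ε) (hm : 0 < m) (hmM : m ≤ M)
    (ν ν' : Fin N → ℝ) (hν : IsProbVec ν) (hν' : IsProbVec ν')
    (Γ : ℕ → Matrix (Fin N) (Fin N) ℝ)
    (hΓ : ∀ t, 1 ≤ t → t ≤ k + 1 → IsRowStochastic (Γ t))
    (w : ℕ → Fin N → ℝ)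
    (hw : ∀ s j, 1 ≤ s → s ≤ k → m ≤ w s j ∧ w s j ≤ M)
    (hprim : ∀ t, 1 ≤ t → t + l - 1 ≤ k + 1 → ∀ i j, ε ≤ matProd Γ t l i j) :
    ∑ j, |(∑ i, fwdRun Γ w 0 ν k i * Γ (k + 1) i j)
          - ∑ i, fwdRun Γ w 0 ν' k i * Γ (k + 1) i j| ≤
      2 * (1 - (ε * m / M) ^ l) ^ ((k + 1) / l) :=
  prediction_filter_exponential_forgetting_general N l k hN hl ε m M hε hm hmM ν ν' hν hν' Γ hΓ w hw
    hprim
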